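/- arXiv:0802.4086 — 5 statements merged into one kernel-verified Lean document; each statement's English description precedes it below -/
import Mathlib

section
/- Let Γ be a cyclic group of order d with generator γ, q ≥ 2 an integer, and M a Z[Γ]-module that is free as a Z-module. Then the image of δ_q = qγ - 1 on M equals {m ∈ M : Tr_q(m) ∈ (q^d - 1)M}, where Tr_q = Σ_{i=0}^{d-1} q^i γ^i. -/
/-!
Put `x = q • G`, so that `x ^ d = q ^ d` and `Tr_q = ∑_{i < d} x ^ i`. The geometric-sum identity
`Tr_q * (x - 1) = (x - 1) * Tr_q = q ^ d - 1` gives one inclusion at once; for the other, if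
`Tr_q m = (q ^ d - 1) • m'` then `(q ^ d - 1) • (x - 1) m' = (x - 1) (Tr_q m) = (q ^ d - 1) • m`,
and `q ^ d - 1 ≠ 0` is a non-zero-divisor on the torsion-free group `M`.
-/

theorem range_sub_one_eq_of_pow_eq_smul_one {R M : Type*} [CommRing R] [AddCommGroup M]
    [Module R M] {x : Module.End R M} {d : ℕ} {c : R} (hx : x ^ d = c • 1)
    (hc : IsSMulRegular M (c - 1)) :
    Set.range ⇑(x - 1) = {m : M | ∃ m' : M, (∑ i ∈ Finset.range d, x ^ i) m = (c - 1) • m'} := by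
  have hxd : x ^ d - 1 = (c - 1) • (1 : Module.End R M) := by rw [hx, sub_smul, one_smul]
  ext m
  constructor
  · rintro ⟨n, rfl⟩
    exact ⟨n, by rw [← Module.End.mul_apply, geom_sum_mul, hxd]; rfl⟩
  · rintro ⟨m', hm'⟩
    refine ⟨m', hc ?_⟩
    calc (c - 1) • (x - 1) m' = (x - 1) ((∑ i ∈ Finset.range d, x ^ i) m) := by
          rw [hm', map_smul]
      _ = (c - 1) • m := by rw [← Module.End.mul_apply, mul_geom_sum, hxd]; rfl

theorem stmt3_general {M : Type*} [AddCommGroup M] [Module ℤ M]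
    [Module.Free ℤ M] (d q : ℕ) (hd : 0 < d) (hq : 2 ≤ q)
    (G : Module.End ℤ M) (hG : G ^ d = 1) :
    Set.range ⇑((q : ℤ) • G - 1)
      = {m : M | ∃ m' : M,
          (∑ i ∈ Finset.range d, ((q : ℤ) ^ i) • G ^ i) m = ((q : ℤ) ^ d - 1) • m'} := by
  have hne : (q : ℤ) ^ d - 1 ≠ 0 :=
    sub_ne_zero.mpr (one_lt_pow₀ (by exact_mod_cast hq) hd.ne').ne'
  simp_rw [← smul_pow]
  -- The statement's integer `•` is `zsmul`, equal to the given `Module ℤ` action only propositionally.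
  convert range_sub_one_eq_of_pow_eq_smul_one (x := (q : ℤ) • G) ?_ (IsSMulRegular.of_ne_zero hne)
    using 6 with - m'
  · exact (Int.cast_smul_eq_zsmul ℤ _ m').symm
  · rw [smul_pow, hG]
    ext m
    exact (Int.cast_smul_eq_zsmul ℤ ((q : ℤ) ^ d) m).symm

/-- With `Γ = ⟨γ⟩` cyclic of order `d`, `q ≥ 2`, and `M` a `ℤ[Γ]`-module
(action of `γ` encoded by `G`, `G ^ d = 1`) that is free of finite rank over `ℤ`,
the image of `δ_q = qγ - 1` equals `{m ∈ M : Tr_q m ∈ (q^d - 1)M}`. -/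
theorem stmt3 {M : Type*} [AddCommGroup M] [Module ℤ M]
    [Module.Free ℤ M] [Module.Finite ℤ M] (d q : ℕ) (hd : 0 < d) (hq : 2 ≤ q)
    (G : Module.End ℤ M) (hG : G ^ d = 1) :
    Set.range ⇑((q : ℤ) • G - 1)
      = {m : M | ∃ m' : M,
          (∑ i ∈ Finset.range d, ((q : ℤ) ^ i) • G ^ i) m = ((q : ℤ) ^ d - 1) • m'} :=
  stmt3_general d q hd hq G hG
end

section
/- Let Γ be cyclic of order d generated by γ, acting on a finitely generated free Z-module Y preserving a symmetric bilinear form B : Y × Y → Z. Let q, n be positive integers with n | q - 1. Then Tr_q(Y^{Γ#}) ⊆ Y^#, i.e. for every w ∈ Y with B(w, y') ∈ nZ for all y' ∈ Y^Γ, and every y' ∈ Y, one has B(Σ_{i=0}^{d-1} q^i γ^i w, y') ∈ nZ. -/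
/-!
Since `q ≡ 1 (mod n)`, `B(Tr_q w, y') ≡ ∑ B(γⁱ w, y') (mod n)`. As `γ` is an isometry with
`γ ^ d = 1`, the adjoint of `γⁱ` is `γ ^ (d - i)`, so this sum equals `B(w, Tr y')`, and `Tr y'`
is `Γ`-fixed.
-/

open Finset

theorem mul_geom_sum_of_pow_eq_one {A : Type*} [Semiring A] {x : A} {d : ℕ} (h : x ^ d = 1) :
    x * ∑ i ∈ range d, x ^ i = ∑ i ∈ range d, x ^ i := by
  cases d with
  | zero => simp
  | succ k =>
    rw [mul_sum, sum_range_succ, ← pow_succ', h, sum_range_succ' _ k, pow_zero]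
    simp only [pow_succ']

theorem dvd_sum_pow_mul_sub_sum {R : Type*} [CommRing R] {n q : R} (h : n ∣ q - 1)
    (s : Finset ℕ) (a : ℕ → R) : n ∣ ∑ i ∈ s, q ^ i * a i - ∑ i ∈ s, a i := by
  rw [← sum_sub_distrib]
  refine dvd_sum fun i _ => ?_
  rw [← sub_one_mul]
  exact (h.trans (sub_one_dvd_pow_sub_one q i)).mul_right _

section Isometry

variable {R M P : Type*} [CommSemiring R] [AddCommMonoid M] [Module R M]
  [AddCommMonoid P] [Module R P] {B : M →ₗ[R] M →ₗ[R] P} {G : Module.End R M}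

theorem apply_pow_apply_pow_of_isometry (hG : ∀ x y, B (G x) (G y) = B x y) (i : ℕ) (x y : M) :
    B ((G ^ i) x) ((G ^ i) y) = B x y := by
  induction i generalizing x y with
  | zero => rfl
  | succ i ih => rw [pow_succ, Module.End.mul_apply, Module.End.mul_apply, ih, hG]

theorem apply_pow_left_eq_apply_pow_right (hG : ∀ x y, B (G x) (G y) = B x y) {d i : ℕ}
    (hd : G ^ d = 1) (hi : i ≤ d) (x y : M) :
    B ((G ^ i) x) y = B x ((G ^ (d - i)) y) := by
  calc B ((G ^ i) x) y = B ((G ^ i) x) ((G ^ i) ((G ^ (d - i)) y)) := by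
        rw [← Module.End.mul_apply, ← pow_add, Nat.add_sub_cancel' hi, hd, Module.End.one_apply]
    _ = B x ((G ^ (d - i)) y) := apply_pow_apply_pow_of_isometry hG i _ _

theorem sum_apply_pow_left_eq_apply_sum_pow (hG : ∀ x y, B (G x) (G y) = B x y) {d : ℕ}
    (hd : G ^ d = 1) (x y : M) :
    ∑ i ∈ range d, B ((G ^ i) x) y = B x ((∑ i ∈ range d, G ^ i) y) := by
  calc ∑ i ∈ range d, B ((G ^ i) x) y
      = ∑ i ∈ range d, B x ((G ^ (d - i)) y) :=
        sum_congr rfl fun i hi => apply_pow_left_eq_apply_pow_right hG hd (mem_range.1 hi).le x y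
    _ = ∑ i ∈ range d, B x ((G ^ (i + 1)) y) := by
        rw [← sum_range_reflect]
        refine sum_congr rfl fun i hi => ?_
        rw [show d - (d - 1 - i) = i + 1 by have := mem_range.1 hi; omega]
    _ = B x ((G * ∑ i ∈ range d, G ^ i) y) := by
        simp only [pow_succ', mul_sum, LinearMap.sum_apply, map_sum]
    _ = B x ((∑ i ∈ range d, G ^ i) y) := by rw [mul_geom_sum_of_pow_eq_one hd]

end Isometry

theorem stmt6_general {Y : Type*} [AddCommGroup Y] [Module ℤ Y]
    (d q n : ℕ) (hq : 0 < q) (hn : n ∣ q - 1)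
    (G : Module.End ℤ Y) (hG : G ^ d = 1)
    (B : Y →ₗ[ℤ] Y →ₗ[ℤ] ℤ)
    (hinv : ∀ x y : Y, B (G x) (G y) = B x y) :
    ∀ w : Y, (∀ y' : Y, G y' = y' → (n : ℤ) ∣ B w y') →
      ∀ y' : Y, (n : ℤ) ∣ B ((∑ i ∈ Finset.range d, ((q : ℤ) ^ i) • G ^ i) w) y' := by
  intro w hw y'
  have hq1 : (n : ℤ) ∣ q - 1 := by
    rw [← Nat.cast_one, ← Nat.cast_sub hq]
    exact Int.natCast_dvd_natCast.2 hn
  have hTq : B ((∑ i ∈ range d, ((q : ℤ) ^ i) • G ^ i) w) y' =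
      ∑ i ∈ range d, (q : ℤ) ^ i * B ((G ^ i) w) y' := by
    rw [LinearMap.sum_apply, map_sum, LinearMap.sum_apply]
    refine sum_congr rfl fun i _ => ?_
    change B ((q : ℤ) ^ i • (G ^ i) w) y' = _
    rw [map_zsmul, LinearMap.smul_apply, smul_eq_mul]
  have hfixed : G ((∑ i ∈ range d, G ^ i) y') = (∑ i ∈ range d, G ^ i) y' := by
    rw [← Module.End.mul_apply, mul_geom_sum_of_pow_eq_one hG]
  have hcong := dvd_sum_pow_mul_sub_sum hq1 (range d) fun i => B ((G ^ i) w) y'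
  rw [sum_apply_pow_left_eq_apply_sum_pow hinv hG, ← hTq] at hcong
  simpa using dvd_add hcong (hw _ hfixed)

/-- With `Γ = ⟨γ⟩` cyclic of order `d` (γ encoded by `G`, `G ^ d = 1`) acting
on the finitely generated free `ℤ`-module `Y` preserving `B`, and `n ∣ q - 1`:
`Tr_q(Y^{Γ#}) ⊆ Y^#`, i.e. if `B(w, y') ∈ nℤ` for all `Γ`-fixed `y'`, then
`B(Tr_q w, y') ∈ nℤ` for every `y' ∈ Y`. -/
theorem stmt6 {Y : Type*} [AddCommGroup Y] [Module ℤ Y]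
    [Module.Free ℤ Y] [Module.Finite ℤ Y] (d q n : ℕ) (hq : 0 < q) (hn : n ∣ q - 1)
    (G : Module.End ℤ Y) (hG : G ^ d = 1)
    (B : Y →ₗ[ℤ] Y →ₗ[ℤ] ℤ)
    (hsymm : ∀ x y : Y, B x y = B y x)
    (hinv : ∀ x y : Y, B (G x) (G y) = B x y) :
    ∀ w : Y, (∀ y' : Y, G y' = y' → (n : ℤ) ∣ B w y') →
      ∀ y' : Y, (n : ℤ) ∣ B ((∑ i ∈ Finset.range d, ((q : ℤ) ^ i) • G ^ i) w) y' :=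
  stmt6_general d q n hq hn G hG B hinv
end

section
/- Let B be a locally compact Hausdorff abelian topological group and A ⊆ B an open subgroup. Then every continuous character A → ℂ^× extends to a continuous character of B; i.e., the restriction map X(B) → X(A) is surjective. -/
/-! Since `ℂ` is algebraically closed, `ℂˣ` is a divisible abelian group, hence an injective
`ℤ`-module by Baer's criterion; so `χ` extends to a homomorphism `ψ : B →* ℂˣ`. Because `ψ` agrees
with the continuous `χ` on the open neighbourhood `A` of `1`, it is continuous at `1`, hence
continuous everywhere. -/

open Function

instance Additive.divisibleByInt {M : Type*} [DivInvMonoid M] [RootableBy M ℤ] :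
    DivisibleBy (Additive M) ℤ where
  div a n := .ofMul (RootableBy.root a.toMul n)
  div_zero _ := congrArg Additive.ofMul (RootableBy.root_zero _)
  div_cancel _ hn := congrArg Additive.ofMul (RootableBy.root_cancel _ hn)

theorem IsAlgClosed.surjective_units_pow {K : Type*} [Field K] [IsAlgClosed K] {n : ℕ}
    (hn : n ≠ 0) : Surjective fun z : Kˣ => z ^ n := by
  intro a
  obtain ⟨z, hz⟩ := IsAlgClosed.exists_pow_nat_eq (a : K) (Nat.pos_of_ne_zero hn)
  have hz0 : z ≠ 0 := by
    rintro rfl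
    exact a.ne_zero (by rw [← hz, zero_pow hn])
  exact ⟨Units.mk0 z hz0, Units.ext hz⟩

noncomputable instance IsAlgClosed.rootableByNatUnits {K : Type*} [Field K] [IsAlgClosed K] :
    RootableBy Kˣ ℕ :=
  rootableByOfPowLeftSurj _ _ IsAlgClosed.surjective_units_pow

noncomputable instance IsAlgClosed.rootableByIntUnits {K : Type*} [Field K] [IsAlgClosed K] :
    RootableBy Kˣ ℤ :=
  Group.rootableByIntOfRootableByNat _

theorem MonoidHom.exists_comp_eq_of_injective {G H Q : Type*} [CommGroup G] [CommGroup H]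
    [CommGroup Q] [RootableBy Q ℤ] (i : G →* H) (hi : Injective i) (f : G →* Q) :
    ∃ g : H →* Q, g.comp i = f := by
  obtain ⟨g, hg⟩ := (Module.Baer.of_divisible (Additive Q)).extension_property_addMonoidHom
    i.toAdditive hi f.toAdditive
  exact ⟨MonoidHom.toAdditive.symm g, MonoidHom.toAdditive.injective hg⟩

theorem MonoidHom.continuous_of_continuous_comp_subtype {G M : Type*} [Group G]
    [TopologicalSpace G] [IsTopologicalGroup G] [Monoid M] [TopologicalSpace M] [ContinuousMul M]
    (f : G →* M) {H : Subgroup G} (hH : IsOpen (H : Set G))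
    (hf : Continuous (f.comp H.subtype)) : Continuous f := by
  refine continuous_of_continuousAt_one f ?_
  have hon : ContinuousOn f H := continuousOn_iff_continuous_domRestrict.mpr hf
  exact hon.continuousAt (hH.mem_nhds H.one_mem)

theorem stmt10_general {B : Type*} [CommGroup B] [TopologicalSpace B] [IsTopologicalGroup B]
    (A : Subgroup B) (hA : IsOpen (A : Set B))
    (χ : ContinuousMonoidHom A ℂˣ) :
    ∃ χ' : ContinuousMonoidHom B ℂˣ, ∀ a : A, χ' (a : B) = χ a := by
  obtain ⟨ψ, hψ⟩ := A.subtype.exists_comp_eq_of_injective A.subtype_injective χ.toMonoidHom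
  have hcont : Continuous ψ :=
    ψ.continuous_of_continuous_comp_subtype hA (hψ ▸ χ.continuous)
  exact ⟨⟨ψ, hcont⟩, fun a => DFunLike.congr_fun hψ a⟩

/-- If `A` is an open subgroup of a locally compact Hausdorff abelian
topological group `B`, then every continuous character `A → ℂˣ` extends to a continuous
character of `B`; i.e. the restriction map `X(B) → X(A)` is surjective. -/
theorem stmt10 {B : Type*} [CommGroup B] [TopologicalSpace B] [IsTopologicalGroup B]
    [LocallyCompactSpace B] [T2Space B]
    (A : Subgroup B) (hA : IsOpen (A : Set B))
    (χ : ContinuousMonoidHom A ℂˣ) :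
    ∃ χ' : ContinuousMonoidHom B ℂˣ, ∀ a : A, χ' (a : B) = χ a :=
  stmt10_general A hA χ
end

section
/- Let q ≥ 2, Γ = ⟨γ⟩ cyclic of order d acting on a finitely generated free Z-module Y, and write Ȳ = Y/(q^d - 1)Y, δ_q = qγ - 1, Tr_q = Σ_{i=0}^{d-1} q^i γ^i. Let W ⊆ Y be a Γ-stable submodule. Then for ȳ ∈ Ȳ, the following are equivalent: (a) there exists a representative y ∈ W of ȳ with δ_q y ∈ (q^d - 1)W; (b) ȳ lies in the image of Tr_q(W̄) → Ȳ, where W̄ = W/(q^d - 1)W. -/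
/-!
With `δ = q • G - 1` and `T = ∑ i < d, q ^ i • G ^ i`, the geometric series and `(q • G) ^ d = q ^ d`
give `T * δ = δ * T = q ^ d - 1`. If `w ∈ W` has `δ w = (q ^ d - 1) • u` with `u ∈ W`, then
`(q ^ d - 1) • T u = T (δ w) = (q ^ d - 1) • w`, and since `Y` is torsion-free, `w = T u`.
Conversely, for `w ∈ W` the representative `T w` satisfies `δ (T w) = (q ^ d - 1) • w`.
-/

open Finset

section

variable {R M : Type*} [CommRing R] [AddCommGroup M] [Module R M]

theorem exists_rep_with_apply_mem_smul_iff_exists_rep_apply {c : R} (hc : IsSMulRegular M c)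
    {δ T : Module.End R M} (hTδ : T * δ = c • 1) (hδT : δ * T = c • 1)
    {W : Submodule R M} (hTW : ∀ w ∈ W, T w ∈ W) (y : M) :
    (∃ w ∈ W, (∃ z, y - w = c • z) ∧ ∃ u ∈ W, δ w = c • u) ↔
      ∃ w ∈ W, ∃ z, y - T w = c • z := by
  constructor
  · rintro ⟨w, -, hyw, u, hu, hδw⟩
    have hTu : T u = w := hc <| show c • T u = c • w by
      rw [← map_smul, ← hδw, ← Module.End.mul_apply, hTδ]
      rfl
    exact ⟨u, hu, hTu ▸ hyw⟩
  · rintro ⟨w, hw, hyTw⟩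
    exact ⟨T w, hTW w hw, hyTw, w, hw, by rw [← Module.End.mul_apply, hδT]; rfl⟩

theorem sum_smul_pow_apply_mem {W : Submodule R M} {G : Module.End R M}
    (hW : ∀ w ∈ W, G w ∈ W) (a : ℕ → R) (s : Finset ℕ) {w : M} (hw : w ∈ W) :
    (∑ i ∈ s, a i • G ^ i) w ∈ W := by
  rw [LinearMap.sum_apply]
  refine W.sum_mem fun i _ => W.smul_mem (a i) ?_
  rw [Module.End.coe_pow]
  exact Set.MapsTo.iterate hW i hw

variable {A : Type*} [Ring A] [Algebra R A]

theorem smul_sub_one_mul_sum_smul_pow {x : A} {d : ℕ} (hx : x ^ d = 1) (q : R) :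
    (q • x - 1) * ∑ i ∈ range d, q ^ i • x ^ i = (q ^ d - 1) • 1 := by
  simp_rw [← smul_pow]
  rw [mul_geom_sum, smul_pow, hx, sub_smul, one_smul]

theorem sum_smul_pow_mul_smul_sub_one {x : A} {d : ℕ} (hx : x ^ d = 1) (q : R) :
    (∑ i ∈ range d, q ^ i • x ^ i) * (q • x - 1) = (q ^ d - 1) • 1 := by
  simp_rw [← smul_pow]
  rw [geom_sum_mul, smul_pow, hx, sub_smul, one_smul]

end

theorem stmt15_general {Y : Type*} [AddCommGroup Y] [Module ℤ Y]
    [Module.Free ℤ Y] (d q : ℕ) (hd : 0 < d) (hq : 2 ≤ q)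
    (G : Module.End ℤ Y) (hG : G ^ d = 1)
    (W : Submodule ℤ Y) (hW : ∀ w ∈ W, G w ∈ W) :
    ∀ y : Y,
      (∃ w ∈ W, (∃ z : Y, y - w = ((q : ℤ) ^ d - 1) • z) ∧
        (∃ u ∈ W, (q : ℤ) • G w - w = ((q : ℤ) ^ d - 1) • u)) ↔
      (∃ w ∈ W, ∃ z : Y,
        y - (∑ i ∈ Finset.range d, ((q : ℤ) ^ i) • G ^ i) w = ((q : ℤ) ^ d - 1) • z) := by
  -- The `•` of `ℤ` on `Y` in the statement is `zsmul`, not the given `Module ℤ Y` instance.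
  obtain rfl : ‹Module ℤ Y› = AddCommGroup.toIntModule Y := Subsingleton.elim _ _
  have hc : IsSMulRegular Y ((q : ℤ) ^ d - 1) :=
    .of_ne_zero (sub_ne_zero.mpr (one_lt_pow₀ (by exact_mod_cast hq : (1 : ℤ) < q) hd.ne').ne')
  exact exists_rep_with_apply_mem_smul_iff_exists_rep_apply (δ := (q : ℤ) • G - 1) hc
    (sum_smul_pow_mul_smul_sub_one hG _) (smul_sub_one_mul_sum_smul_pow hG _)
    (fun _ => sum_smul_pow_apply_mem hW _ _)

/-- `Γ = ⟨γ⟩` cyclic of order `d` (γ acting by `G`, `G ^ d = 1`) acts on the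
finitely generated free `ℤ`-module `Y`; `q ≥ 2`; `W ⊆ Y` a `Γ`-stable submodule. For
`ȳ ∈ Ȳ = Y/(q^d - 1)Y` (represented by `y : Y`), the following are equivalent:
(a) some representative `w ∈ W` of `ȳ` satisfies `δ_q w ∈ (q^d - 1)W`;
(b) `ȳ` lies in the image of `Tr_q(W̄) → Ȳ`. -/
theorem stmt15 {Y : Type*} [AddCommGroup Y] [Module ℤ Y]
    [Module.Free ℤ Y] [Module.Finite ℤ Y] (d q : ℕ) (hd : 0 < d) (hq : 2 ≤ q)
    (G : Module.End ℤ Y) (hG : G ^ d = 1)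
    (W : Submodule ℤ Y) (hW : ∀ w ∈ W, G w ∈ W) :
    ∀ y : Y,
      (∃ w ∈ W, (∃ z : Y, y - w = ((q : ℤ) ^ d - 1) • z) ∧
        (∃ u ∈ W, (q : ℤ) • G w - w = ((q : ℤ) ^ d - 1) • u)) ↔
      (∃ w ∈ W, ∃ z : Y,
        y - (∑ i ∈ Finset.range d, ((q : ℤ) ^ i) • G ^ i) w = ((q : ℤ) ^ d - 1) • z) :=
  stmt15_general d q hd hq G hG W hW
end

section
/- Let 1 → A → S̃ → S → 1 be a central extension of a locally compact abelian group S by a finite cyclic group A with faithful character ε : A → ℂ^×, such that the radical Z†(S) of the commutator pairing is open of finite index in S. Let M̃ be a maximal commutative subgroup of S̃ and χ a genuine character of Z(S̃) extended to a character χ̃ of M̃. Then the induced representation Ind_{M̃}^{S̃} χ̃ is irreducible, with central character χ, and its isomorphism class is independent of the choices of M̃ and χ̃; moreover every irreducible representation of S̃ on which Z(S̃) acts by χ is isomorphic to it. -/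
/-!
Commutators are central, so `e x y = ε ⁅x, y⁆` is bimultiplicative. As `ε` is faithful and `M` is
maximal commutative, `e x` is trivial on `M` exactly when `x ∈ M`, and `e · m` is trivial exactly
when `m` is central; orthogonality of characters of the finite groups `M ⧸ Z` and `G ⧸ M` (`Z` the
center) then does all the work.

For a representation `π` in which `Z` acts by `χ`, let `P = ∑_{m ∈ M/Z} χ(m)⁻¹ π(m)`, so that
`P π(m) = χ(m) P`. On the induced space `P f = [M : Z] f(1) χ₀`, with `χ₀` the extension of `χ`
by zero, and the translates of `χ₀` span the induced space: a nonzero invariant subspace is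
everything. In an irreducible `V`, the conjugates of `P` by representatives of `G ⧸ M` add up to
`[G : M] • 1`, so some functional `μ` has `μ ∘ P ≠ 0`, and `v ↦ (x ↦ μ (P (π x v)))` is a nonzero
intertwiner into the induced space, an isomorphism since both sides are irreducible. Applied to
the induced representation of another pair `(M₂, χ₂)` it gives independence of the choices.
-/

/-- Right-translation representation of a group `G` on the space of functions `G → ℂ`. -/
noncomputable def rho (G : Type*) [Group G] : G →* ((G → ℂ) →ₗ[ℂ] (G → ℂ)) where
  toFun g :=
    { toFun := fun f x => f (x * g)
      map_add' := fun _ _ => rfl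
      map_smul' := fun _ _ => rfl }
  map_one' := by
    apply LinearMap.ext; intro f; funext x; simp
  map_mul' := by
    intro g h
    apply LinearMap.ext; intro f; funext x
    show f (x * (g * h)) = f (x * g * h)
    rw [mul_assoc]

/-- The space of the representation induced from the character `χ` of the subgroup `M`:
functions `f : G → ℂ` with `f(mx) = χ(m) f(x)` for `m ∈ M`. -/
noncomputable def indSpace {G : Type*} [Group G] (M : Subgroup G) (χ : M →* ℂˣ) :
    Submodule ℂ (G → ℂ) where
  carrier := {f | ∀ (m : M) (x : G), f ((m : G) * x) = (χ m : ℂ) * f x}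
  add_mem' := by
    intro f g hf hg m x
    simp only [Pi.add_apply, hf m x, hg m x]
    ring
  zero_mem' := by intro m x; simp
  smul_mem' := by
    intro c f hf m x
    simp only [Pi.smul_apply, smul_eq_mul, hf m x]
    ring

open scoped commutatorElement

section

open Subgroup

open scoped Classical in
theorem sum_quotient_out_eq_ite {K : Type*} [Group K] {H : Subgroup K} [H.Normal]
    [Fintype (K ⧸ H)] (φ : K →* ℂˣ) (hH : H ≤ φ.ker) :
    ∑ q : K ⧸ H, (φ q.out : ℂ) = if φ = 1 then (Fintype.card (K ⧸ H) : ℂ) else 0 := by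
  let ψ : K ⧸ H →* ℂ := (Units.coeHom ℂ).comp (QuotientGroup.lift H φ hH)
  have hψ : ψ = 1 ↔ φ = 1 := by
    constructor <;> intro h <;> ext k
    · simpa [ψ] using DFunLike.congr_fun h (k : K ⧸ H)
    · simp [ψ, h]
  have hout : ∀ q, (φ q.out : ℂ) = ψ q := fun q => by
    conv_rhs => rw [← QuotientGroup.out_eq' q]
    rfl
  simp_rw [hout, sum_hom_units, hψ]
  push_cast
  rfl

theorem sum_quotient_out_mul {K E : Type*} [Group K] [AddCommMonoid E] {H : Subgroup K}
    [H.Normal] [Fintype (K ⧸ H)] (F : K → E) (hF : ∀ k, ∀ h ∈ H, F (k * h) = F k) (k₀ : K) :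
    ∑ q : K ⧸ H, F (q.out * k₀) = ∑ q : K ⧸ H, F q.out := by
  refine Fintype.sum_equiv (Equiv.mulRight (k₀ : K ⧸ H)) _ _ fun q => ?_
  obtain ⟨h, hh⟩ := QuotientGroup.mk_out_eq_mul H (q.out * k₀)
  have hq : q * (k₀ : K ⧸ H) = ((q.out * k₀ : K) : K ⧸ H) := by
    rw [QuotientGroup.mk_mul, QuotientGroup.out_eq']
  show F (q.out * k₀) = F (q * (k₀ : K ⧸ H)).out
  rw [hq, hh, hF _ _ h.2]

variable {G : Type*} [Group G]

theorem commutatorElement_mul_left_of_mem_center (h : ∀ x y : G, ⁅x, y⁆ ∈ center G)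
    (a b c : G) : ⁅a * b, c⁆ = ⁅a, c⁆ * ⁅b, c⁆ := by
  rw [commutatorElement_mul_left_eq_conj_mul, mem_center_iff.mp (h b c) a,
    mul_inv_cancel_right, mem_center_iff.mp (h b c)]

theorem commutatorElement_mul_right_of_mem_center (h : ∀ x y : G, ⁅x, y⁆ ∈ center G)
    (a b c : G) : ⁅a, b * c⁆ = ⁅a, b⁆ * ⁅a, c⁆ := by
  rw [commutatorElement_mul_right_eq_mul_conj, mul_assoc _ b, mem_center_iff.mp (h a c) b,
    ← mul_assoc, mul_inv_cancel_right]

theorem normal_of_commutatorElement_mem {M : Subgroup G} (h : ∀ x y : G, ⁅x, y⁆ ∈ M) :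
    M.Normal where
  conj_mem m hm g := by
    rw [show g * m * g⁻¹ = ⁅g, m⁆ * m by group]
    exact M.mul_mem (h g m) hm

theorem mem_of_forall_commute_of_maximal {M : Subgroup G}
    (hMmax : ∀ M' : Subgroup G, M ≤ M' → (∀ x ∈ M', ∀ y ∈ M', x * y = y * x) → M' = M)
    (hMcomm : ∀ x ∈ M, ∀ y ∈ M, x * y = y * x) {x : G} (hx : ∀ m ∈ M, x * m = m * x) :
    x ∈ M := by
  have hcomm : ∀ a ∈ insert x (M : Set G), ∀ b ∈ insert x (M : Set G), a * b = b * a := by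
    rintro a (rfl | ha) b (rfl | hb)
    exacts [rfl, hx b hb, (hx a ha).symm, hMcomm a ha b hb]
  have := isMulCommutative_closure hcomm
  have hclosure := hMmax (closure (insert x M)) (fun m hm => subset_closure (Or.inr hm))
    fun a ha b hb => congrArg Subtype.val (mul_comm' (⟨a, ha⟩ : Subgroup.closure _) ⟨b, hb⟩)
  exact hclosure ▸ subset_closure (Set.mem_insert x _)

section CommPairing

variable {A : Subgroup G} (hAcent : A ≤ center G) (hcommA : ∀ x y : G, ⁅x, y⁆ ∈ A)
  (ε : A →* ℂˣ)

def commPairing : G →* G →* ℂˣ where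
  toFun x :=
    { toFun y := ε ⟨⁅x, y⁆, hcommA x y⟩
      map_one' := by simp only [commutatorElement_one_right]; exact map_one ε
      map_mul' y y' := by
        rw [← map_mul]
        congr 1
        exact Subtype.ext (commutatorElement_mul_right_of_mem_center
          (fun a b => hAcent (hcommA a b)) x y y') }
  map_one' := by ext; simp only [commutatorElement_one_left]; exact congrArg Units.val (map_one ε)
  map_mul' x x' := by
    ext y
    simp only [MonoidHom.coe_mk, OneHom.coe_mk, MonoidHom.mul_apply, ← map_mul]
    congr 2
    exact Subtype.ext (commutatorElement_mul_left_of_mem_center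
      (fun a b => hAcent (hcommA a b)) x x' y)

@[simp]
theorem commPairing_apply (x y : G) :
    commPairing hAcent hcommA ε x y = ε ⟨⁅x, y⁆, hcommA x y⟩ := rfl

variable {ε}

theorem commPairing_eq_one_of_commute {x y : G} (h : x * y = y * x) :
    commPairing hAcent hcommA ε x y = 1 := by
  simp only [commPairing_apply, commutatorElement_eq_one_iff_mul_comm.mpr h]
  exact map_one ε

theorem commPairing_eq_one_iff (hε : Function.Injective ε) {x y : G} :
    commPairing hAcent hcommA ε x y = 1 ↔ x * y = y * x := by
  refine ⟨fun h => ?_, commPairing_eq_one_of_commute hAcent hcommA⟩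
  rw [commPairing_apply, ← map_one ε] at h
  exact commutatorElement_eq_one_iff_mul_comm.mp (congrArg Subtype.val (hε h))

theorem commPairing_comp_subtype_eq_one_iff (hε : Function.Injective ε) {M : Subgroup G}
    (hMmax : ∀ M' : Subgroup G, M ≤ M' → (∀ x ∈ M', ∀ y ∈ M', x * y = y * x) → M' = M)
    (hMcomm : ∀ x ∈ M, ∀ y ∈ M, x * y = y * x) {x : G} :
    (commPairing hAcent hcommA ε x).comp M.subtype = 1 ↔ x ∈ M := by
  refine ⟨fun h => mem_of_forall_commute_of_maximal hMmax hMcomm fun m hm =>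
    (commPairing_eq_one_iff hAcent hcommA hε).mp (DFunLike.congr_fun h ⟨m, hm⟩), fun hx => ?_⟩
  ext m
  simp [commPairing_eq_one_of_commute hAcent hcommA (hMcomm x hx m m.2)]

theorem commPairing_flip_eq_one_iff (hε : Function.Injective ε) {m : G} :
    (commPairing hAcent hcommA ε).flip m = 1 ↔ m ∈ center G := by
  rw [mem_center_iff]
  refine ⟨fun h g => (commPairing_eq_one_iff hAcent hcommA hε).mp (DFunLike.congr_fun h g),
    fun h => ?_⟩
  ext g
  simp [commPairing_eq_one_of_commute hAcent hcommA (h g)]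

theorem sum_commPairing_out_right (hε : Function.Injective ε) {M : Subgroup G}
    (hMmax : ∀ M' : Subgroup G, M ≤ M' → (∀ x ∈ M', ∀ y ∈ M', x * y = y * x) → M' = M)
    (hMcomm : ∀ x ∈ M, ∀ y ∈ M, x * y = y * x) [Fintype (M ⧸ (center G).subgroupOf M)]
    (x : G) [Decidable (x ∈ M)] :
    ∑ q : M ⧸ (center G).subgroupOf M, (commPairing hAcent hcommA ε x q.out : ℂ) =
      if x ∈ M then (Fintype.card (M ⧸ (center G).subgroupOf M) : ℂ) else 0 := by
  have hker : (center G).subgroupOf M ≤ ((commPairing hAcent hcommA ε x).comp M.subtype).ker :=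
    fun z hz => commPairing_eq_one_of_commute hAcent hcommA
      (mem_center_iff.mp (mem_subgroupOf.mp hz) x)
  classical
  exact (sum_quotient_out_eq_ite _ hker).trans
    (if_congr (commPairing_comp_subtype_eq_one_iff hAcent hcommA hε hMmax hMcomm) rfl rfl)

theorem sum_commPairing_out_left (hε : Function.Injective ε) {M : Subgroup G} [M.Normal]
    (hMcomm : ∀ x ∈ M, ∀ y ∈ M, x * y = y * x) [Fintype (G ⧸ M)] {m : G} (hm : m ∈ M)
    [Decidable (m ∈ center G)] :
    ∑ p : G ⧸ M, (commPairing hAcent hcommA ε p.out m : ℂ) =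
      if m ∈ center G then (Fintype.card (G ⧸ M) : ℂ) else 0 := by
  have hker : M ≤ ((commPairing hAcent hcommA ε).flip m).ker :=
    fun x hx => commPairing_eq_one_of_commute hAcent hcommA (hMcomm x hx m hm)
  classical
  exact (sum_quotient_out_eq_ite _ hker).trans
    (if_congr (commPairing_flip_eq_one_iff hAcent hcommA hε) rfl rfl)

end CommPairing

section Induced

variable {M : Subgroup G} (χ : M →* ℂˣ)

@[simp]
theorem rho_apply (g : G) (f : G → ℂ) (x : G) : rho G g f x = f (x * g) := rfl

theorem rho_mem_indSpace (g : G) {f : G → ℂ} (hf : f ∈ indSpace M χ) :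
    rho G g f ∈ indSpace M χ := fun m x => by
  simpa only [rho_apply, mul_assoc] using hf m (x * g)

theorem rho_eq_smul_of_mem_center {z : G} (hz : z ∈ center G) (hzM : z ∈ M) {f : G → ℂ}
    (hf : f ∈ indSpace M χ) : rho G z f = (χ ⟨z, hzM⟩ : ℂ) • f := by
  funext x
  rw [rho_apply, mem_center_iff.mp hz x]
  exact hf ⟨z, hzM⟩ x

open scoped Classical in
noncomputable def extendByZero (x : G) : ℂ := if h : x ∈ M then (χ ⟨x, h⟩ : ℂ) else 0

theorem extendByZero_of_mem {x : G} (hx : x ∈ M) : extendByZero χ x = χ ⟨x, hx⟩ := by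
  simp [extendByZero, hx]

theorem extendByZero_of_notMem {x : G} (hx : x ∉ M) : extendByZero χ x = 0 := by
  simp [extendByZero, hx]

theorem extendByZero_one : extendByZero χ 1 = 1 := by
  rw [extendByZero_of_mem χ M.one_mem]
  exact congrArg Units.val (map_one χ)

theorem extendByZero_mem_indSpace : extendByZero χ ∈ indSpace M χ := by
  intro m x
  by_cases hx : x ∈ M
  · rw [extendByZero_of_mem χ hx, extendByZero_of_mem χ (M.mul_mem m.2 hx), ← Units.val_mul,
      ← map_mul]
    rfl
  · rw [extendByZero_of_notMem χ hx, extendByZero_of_notMem χ fun h => hx ?_, mul_zero]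
    simpa using M.mul_mem (M.inv_mem m.2) h

theorem eq_sum_smul_rho_extendByZero [M.Normal] [Fintype (G ⧸ M)] {f : G → ℂ}
    (hf : f ∈ indSpace M χ) :
    f = ∑ p : G ⧸ M, f p.out • rho G p.out⁻¹ (extendByZero χ) := by
  classical
  funext x
  have hterm : ∀ p : G ⧸ M,
      f p.out * extendByZero χ (x * p.out⁻¹) = if p = x then f x else 0 := by
    intro p
    have hiff : x * p.out⁻¹ ∈ M ↔ p = x := by
      rw [Normal.mem_comm_iff inferInstance, ← QuotientGroup.eq, QuotientGroup.out_eq']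
    by_cases h : x * p.out⁻¹ ∈ M
    · have hx := hf ⟨_, h⟩ p.out
      rw [inv_mul_cancel_right] at hx
      rw [extendByZero_of_mem χ h, if_pos (hiff.mp h), hx, mul_comm]
    · rw [extendByZero_of_notMem χ h, mul_zero, if_neg (hiff.not.mp h)]
  simp only [Finset.sum_apply, Pi.smul_apply, rho_apply, smul_eq_mul, hterm,
    Finset.sum_ite_eq', Finset.mem_univ, if_true]

theorem indSpace_le_of_extendByZero_mem [M.Normal] [Finite (G ⧸ M)] {U : Submodule ℂ (G → ℂ)}
    (hU : ∀ g : G, ∀ f ∈ U, rho G g f ∈ U) (h0 : extendByZero χ ∈ U) : indSpace M χ ≤ U := by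
  have := Fintype.ofFinite (G ⧸ M)
  intro f hf
  rw [eq_sum_smul_rho_extendByZero χ hf]
  exact U.sum_mem fun p _ => U.smul_mem _ (hU _ _ h0)

noncomputable def indRep : G →* (indSpace M χ →ₗ[ℂ] indSpace M χ) where
  toFun g := (rho G g).restrict fun _ hf => rho_mem_indSpace χ g hf
  map_one' := by ext; simp
  map_mul' g h := by ext; simp [mul_assoc]

theorem indRep_eq_smul_of_mem_center {z : G} (hz : z ∈ center G) (hzM : z ∈ M) :
    indRep χ z = (χ ⟨z, hzM⟩ : ℂ) • 1 := by
  ext f x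
  exact congrFun (rho_eq_smul_of_mem_center χ hz hzM f.2) x

variable {V : Type*} [AddCommGroup V] [Module ℂ V]

/-- When `N` is normal and acts by `χ`, this is `[M : N]` times the projection onto the vectors
on which all of `M` acts by `χ`. -/
noncomputable def twistedAverage (π : G →* V →ₗ[ℂ] V) (N : Subgroup M) [Fintype (M ⧸ N)] :
    V →ₗ[ℂ] V :=
  ∑ q : M ⧸ N, (((χ q.out)⁻¹ : ℂˣ) : ℂ) • π q.out

theorem twistedAverage_mul {π : G →* V →ₗ[ℂ] V} {N : Subgroup M} [N.Normal] [Fintype (M ⧸ N)]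
    (hN : ∀ n ∈ N, π n = (χ n : ℂ) • 1) (m : M) :
    twistedAverage χ π N * π m = (χ m : ℂ) • twistedAverage χ π N := by
  let F : M → V →ₗ[ℂ] V := fun k => (((χ k)⁻¹ : ℂˣ) : ℂ) • π k
  have hF : ∀ k, ∀ n ∈ N, F (k * n) = F k := by
    intro k n hn
    simp only [F, Subgroup.coe_mul, map_mul, hN n hn, mul_smul_comm, mul_one, smul_smul,
      mul_inv_rev, Units.val_mul]
    rw [mul_right_comm, ← Units.val_mul, inv_mul_cancel, Units.val_one, one_mul]
  have hFm : ∀ k, F k * π m = (χ m : ℂ) • F (k * m) := by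
    intro k
    simp only [F, smul_mul_assoc, Subgroup.coe_mul, map_mul, smul_smul, mul_inv_rev,
      ← mul_assoc, ← Units.val_mul, mul_inv_cancel, one_mul]
  calc twistedAverage χ π N * π m = ∑ q : M ⧸ N, F q.out * π m := Finset.sum_mul ..
    _ = (χ m : ℂ) • ∑ q : M ⧸ N, F (q.out * m) := by
      simp only [hFm, Finset.smul_sum]
    _ = (χ m : ℂ) • twistedAverage χ π N := by rw [sum_quotient_out_mul F hF]; rfl

end Induced

section Heisenberg

variable {A : Subgroup G} (hAcent : A ≤ center G) (hcommA : ∀ x y : G, ⁅x, y⁆ ∈ A)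
  {ε : A →* ℂˣ} (hε : Function.Injective ε) {M : Subgroup G}
  (hMcomm : ∀ x ∈ M, ∀ y ∈ M, x * y = y * x)
  (hMmax : ∀ M' : Subgroup G, M ≤ M' → (∀ x ∈ M', ∀ y ∈ M', x * y = y * x) → M' = M)
  (hZM : center G ≤ M) (hAM : A ≤ M) {χ : M →* ℂˣ}
  (hgen : ∀ a : A, χ ⟨(a : G), hAM a.2⟩ = ε a)

include hgen in
theorem apply_mul_of_mem_indSpace {f : G → ℂ} (hf : f ∈ indSpace M χ) (x : G) (m : M) :
    f (x * m) = commPairing hAcent hcommA ε x m * χ m * f x := by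
  have hsplit : x * m = ((⟨⁅x, m⁆, hAM (hcommA x m)⟩ * m : M) : G) * x := by
    simp only [Subgroup.coe_mul]
    group
  rw [hsplit, hf, map_mul, Units.val_mul, hgen ⟨_, hcommA x m⟩]
  rfl

include hgen in
theorem twistedAverage_rho_apply (N : Subgroup M) [Fintype (M ⧸ N)] {f : G → ℂ}
    (hf : f ∈ indSpace M χ) (x : G) :
    twistedAverage χ (rho G) N f x =
      (∑ q : M ⧸ N, (commPairing hAcent hcommA ε x q.out : ℂ)) * f x := by
  simp only [twistedAverage, LinearMap.sum_apply, Finset.sum_apply, LinearMap.smul_apply,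
    Pi.smul_apply, rho_apply, smul_eq_mul, Finset.sum_mul,
    apply_mul_of_mem_indSpace hAcent hcommA hAM hgen hf, Units.val_inv_eq_inv_val]
  refine Finset.sum_congr rfl fun q _ => ?_
  field_simp

include hAcent hcommA hε hMcomm hMmax hgen in
theorem twistedAverage_rho_eq_smul_extendByZero
    [Fintype (M ⧸ (center G).subgroupOf M)] {f : G → ℂ} (hf : f ∈ indSpace M χ) :
    twistedAverage χ (rho G) ((center G).subgroupOf M) f =
      ((Fintype.card (M ⧸ (center G).subgroupOf M) : ℂ) * f 1) • extendByZero χ := by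
  classical
  funext x
  rw [twistedAverage_rho_apply hAcent hcommA hAM hgen _ hf,
    sum_commPairing_out_right hAcent hcommA hε hMmax hMcomm, Pi.smul_apply, smul_eq_mul]
  by_cases hx : x ∈ M
  · have hfx := hf ⟨x, hx⟩ 1
    rw [mul_one] at hfx
    rw [if_pos hx, extendByZero_of_mem χ hx, hfx]
    ring
  · rw [if_neg hx, extendByZero_of_notMem χ hx, zero_mul, mul_zero]

include hAcent hcommA hε hMcomm hMmax hZM hgen in
theorem eq_bot_or_eq_indSpace [(center G).FiniteIndex] (U : Submodule ℂ (G → ℂ))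
    (hU : U ≤ indSpace M χ) (hUinv : ∀ g : G, ∀ f ∈ U, rho G g f ∈ U) : U = ⊥ ∨ U = indSpace M χ := by
  have : M.Normal := normal_of_commutatorElement_mem fun x y => hAM (hcommA x y)
  have : M.FiniteIndex := finiteIndex_of_le hZM
  have := Fintype.ofFinite (M ⧸ (center G).subgroupOf M)
  refine or_iff_not_imp_left.mpr fun hne =>
    le_antisymm hU (indSpace_le_of_extendByZero_mem χ hUinv ?_)
  obtain ⟨f, hfU, hf0⟩ := (Submodule.ne_bot_iff U).mp hne
  obtain ⟨x₀, hx₀⟩ := Function.ne_iff.mp hf0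
  have hgU : rho G x₀ f ∈ U := hUinv x₀ f hfU
  have hc : (Fintype.card (M ⧸ (center G).subgroupOf M) : ℂ) * rho G x₀ f 1 ≠ 0 := by
    rw [rho_apply, one_mul]
    exact mul_ne_zero (Nat.cast_ne_zero.mpr Fintype.card_ne_zero) hx₀
  have havg : twistedAverage χ (rho G) ((center G).subgroupOf M) (rho G x₀ f) ∈ U := by
    simp only [twistedAverage, LinearMap.sum_apply, LinearMap.smul_apply]
    exact U.sum_mem fun q _ => U.smul_mem _ (hUinv _ _ hgU)
  rw [twistedAverage_rho_eq_smul_extendByZero hAcent hcommA hε hMcomm hMmax hAM hgen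
    (hU hgU)] at havg
  have h0 := U.smul_mem ((Fintype.card (M ⧸ (center G).subgroupOf M) : ℂ) * rho G x₀ f 1)⁻¹ havg
  rwa [smul_smul, inv_mul_cancel₀ hc, one_smul] at h0

section Universal

variable {V : Type*} [AddCommGroup V] [Module ℂ V] {π : G →* V →ₗ[ℂ] V}
  (hπ : ∀ (z : G) (hz : z ∈ center G), π z = (χ ⟨z, hZM hz⟩ : ℂ) • 1)

include hπ in
theorem inv_smul_eq_one_of_mem_center {m : M} (hm : (m : G) ∈ center G) :
    (((χ m)⁻¹ : ℂˣ) : ℂ) • π m = 1 := by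
  rw [hπ m hm, smul_smul, ← Units.val_mul, inv_mul_cancel, Units.val_one, one_smul]

include hAcent hgen hπ in
theorem conj_eq_commPairing_smul (g m : G) :
    π g * π m * π g⁻¹ = (commPairing hAcent hcommA ε g m : ℂ) • π m := by
  rw [← map_mul, ← map_mul, show g * m * g⁻¹ = ⁅g, m⁆ * m by group, map_mul,
    hπ _ (hAcent (hcommA g m)), smul_mul_assoc, one_mul]
  exact congrArg (fun c : ℂˣ => (c : ℂ) • π m) (hgen ⟨_, hcommA g m⟩)

include hAcent hcommA hε hMcomm hgen hπ in
theorem sum_conj_twistedAverage [M.Normal] [Fintype (G ⧸ M)]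
    [Fintype (M ⧸ (center G).subgroupOf M)] :
    ∑ p : G ⧸ M, π p.out * twistedAverage χ π ((center G).subgroupOf M) * π p.out⁻¹ =
      (Fintype.card (G ⧸ M) : ℂ) • 1 := by
  classical
  have hterm : ∀ q : M ⧸ (center G).subgroupOf M,
      (∑ p : G ⧸ M, (commPairing hAcent hcommA ε p.out q.out : ℂ)) •
        ((((χ q.out)⁻¹ : ℂˣ) : ℂ) • π q.out) =
      if q = 1 then (Fintype.card (G ⧸ M) : ℂ) • 1 else 0 := by
    intro q
    have hiff : (q.out : G) ∈ center G ↔ q = 1 := by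
      rw [← mem_subgroupOf, ← QuotientGroup.eq_one_iff, QuotientGroup.out_eq']
    rw [sum_commPairing_out_left hAcent hcommA hε hMcomm q.out.2]
    by_cases hq : q = 1
    · rw [if_pos (hiff.mpr hq), if_pos hq, inv_smul_eq_one_of_mem_center hZM hπ (hiff.mpr hq)]
    · rw [if_neg (hiff.not.mpr hq), if_neg hq, zero_smul]
  calc ∑ p : G ⧸ M, π p.out * twistedAverage χ π ((center G).subgroupOf M) * π p.out⁻¹
      = ∑ p : G ⧸ M, ∑ q : M ⧸ (center G).subgroupOf M,
          (commPairing hAcent hcommA ε p.out q.out : ℂ) •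
            ((((χ q.out)⁻¹ : ℂˣ) : ℂ) • π q.out) := by
        refine Finset.sum_congr rfl fun p _ => ?_
        rw [twistedAverage, Finset.mul_sum, Finset.sum_mul]
        refine Finset.sum_congr rfl fun q _ => ?_
        rw [mul_smul_comm, smul_mul_assoc,
          conj_eq_commPairing_smul hAcent hcommA hZM hAM hgen hπ, smul_comm]
    _ = (Fintype.card (G ⧸ M) : ℂ) • 1 := by
        rw [Finset.sum_comm]
        simp only [← Finset.sum_smul, hterm, Finset.sum_ite_eq', Finset.mem_univ, if_true]

include hAcent hcommA hε hMcomm hgen hπ in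
theorem twistedAverage_ne_zero [Nontrivial V] [M.Normal] [Fintype (G ⧸ M)]
    [Fintype (M ⧸ (center G).subgroupOf M)] :
    twistedAverage χ π ((center G).subgroupOf M) ≠ 0 := by
  intro hP
  obtain ⟨v, hv⟩ := exists_ne (0 : V)
  have h := LinearMap.congr_fun (sum_conj_twistedAverage hAcent hcommA hε hMcomm hZM hAM hgen hπ) v
  simp only [hP, mul_zero, zero_mul, Finset.sum_const_zero, LinearMap.zero_apply,
    LinearMap.smul_apply, Module.End.one_apply] at h
  exact hv ((smul_eq_zero.mp h.symm).resolve_left (Nat.cast_ne_zero.mpr Fintype.card_ne_zero))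

include hAcent hcommA hε hMcomm hMmax hZM hgen in
theorem exists_intertwiner_onto_indSpace_of_eigenfunctional [(center G).FiniteIndex]
    (hirr : ∀ U : Submodule ℂ V, (∀ g : G, ∀ v ∈ U, π g v ∈ U) → U = ⊥ ∨ U = ⊤)
    {ℓ : V →ₗ[ℂ] ℂ} (hℓ : ∀ (m : M) (v : V), ℓ (π m v) = χ m * ℓ v) (hℓ0 : ℓ ≠ 0) :
    ∃ T : V →ₗ[ℂ] (G → ℂ), Function.Injective T ∧ LinearMap.range T = indSpace M χ ∧
      ∀ (g : G) (v : V), T (π g v) = rho G g (T v) := by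
  let T : V →ₗ[ℂ] (G → ℂ) := LinearMap.pi fun x => ℓ ∘ₗ π x
  have hT : ∀ (g : G) (v : V), T (π g v) = rho G g (T v) := fun g v => funext fun x => by
    simp [T, map_mul]
  have hTind : ∀ v, T v ∈ indSpace M χ := fun v m x => by
    simp [T, map_mul, hℓ]
  obtain ⟨v₀, hv₀⟩ : ∃ v, ℓ v ≠ 0 := by
    by_contra! h
    exact hℓ0 (LinearMap.ext h)
  have hT0 : T v₀ ≠ 0 := fun h => hv₀ (by simpa [T] using congrFun h 1)
  refine ⟨T, ?_, ?_, hT⟩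
  · rw [← LinearMap.ker_eq_bot]
    refine (hirr _ fun g v hv => ?_).resolve_right fun htop => hT0 ?_
    · rw [LinearMap.mem_ker] at hv ⊢
      rw [hT, hv, map_zero]
    · exact LinearMap.mem_ker.mp (htop ▸ Submodule.mem_top)
  · refine (eq_bot_or_eq_indSpace hAcent hcommA hε hMcomm hMmax hZM hAM hgen
      (LinearMap.range T) ?_ ?_).resolve_left fun hbot => hT0 ?_
    · rintro _ ⟨v, rfl⟩
      exact hTind v
    · rintro g _ ⟨v, rfl⟩
      exact ⟨π g v, hT g v⟩
    · exact (Submodule.mem_bot ℂ).mp (hbot ▸ LinearMap.mem_range_self T v₀)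

include hAcent hcommA hε hMcomm hMmax hgen hπ in
theorem exists_intertwiner_onto_indSpace [(center G).FiniteIndex] [Nontrivial V]
    (hirr : ∀ U : Submodule ℂ V, (∀ g : G, ∀ v ∈ U, π g v ∈ U) → U = ⊥ ∨ U = ⊤) :
    ∃ T : V →ₗ[ℂ] (G → ℂ), Function.Injective T ∧ LinearMap.range T = indSpace M χ ∧
      ∀ (g : G) (v : V), T (π g v) = rho G g (T v) := by
  have : M.Normal := normal_of_commutatorElement_mem fun x y => hAM (hcommA x y)
  have : M.FiniteIndex := finiteIndex_of_le hZM
  have := Fintype.ofFinite (M ⧸ (center G).subgroupOf M)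
  have := Fintype.ofFinite (G ⧸ M)
  set P := twistedAverage χ π ((center G).subgroupOf M)
  obtain ⟨v₀, hv₀⟩ : ∃ v, P v ≠ 0 := by
    by_contra! h
    exact twistedAverage_ne_zero hAcent hcommA hε hMcomm hZM hAM hgen hπ (LinearMap.ext h)
  obtain ⟨μ, hμ⟩ : ∃ μ : Module.Dual ℂ V, μ (P v₀) ≠ 0 := by
    by_contra! h
    exact hv₀ ((Module.forall_dual_apply_eq_zero_iff ℂ _).mp h)
  have hP : ∀ (m : M) (v : V), μ (P (π m v)) = χ m * μ (P v) := fun m v => by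
    have h := LinearMap.congr_fun
      (twistedAverage_mul χ (fun n hn => hπ n (mem_subgroupOf.mp hn)) m) v
    rw [Module.End.mul_apply, LinearMap.smul_apply] at h
    rw [h, map_smul, smul_eq_mul]
  exact exists_intertwiner_onto_indSpace_of_eigenfunctional hAcent hcommA hε hMcomm hMmax hZM
    hAM hgen hirr (ℓ := μ ∘ₗ P) hP fun h => hμ (LinearMap.congr_fun h v₀)

end Universal

include hAcent hcommA hε hMcomm hMmax hZM hgen in
theorem indRep_eq_bot_or_eq_top [(center G).FiniteIndex] (U : Submodule ℂ (indSpace M χ))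
    (hU : ∀ g : G, ∀ f ∈ U, indRep χ g f ∈ U) : U = ⊥ ∨ U = ⊤ := by
  have hinj := Submodule.map_injective_of_injective (indSpace M χ).injective_subtype
  refine (eq_bot_or_eq_indSpace hAcent hcommA hε hMcomm hMmax hZM hAM hgen
    (U.map (indSpace M χ).subtype) (Submodule.map_subtype_le _ _) ?_).imp
    (fun h => hinj (h.trans (Submodule.map_bot _).symm))
    (fun h => hinj (h.trans (Submodule.map_subtype_top _).symm))
  rintro g _ ⟨f, hf, rfl⟩
  exact ⟨_, hU g f hf, rfl⟩

include hAcent hcommA hε hMcomm hMmax hgen in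
theorem exists_intertwiner_indSpace_of_eqOn_center [(center G).FiniteIndex] {M₂ : Subgroup G}
    (hM₂comm : ∀ x ∈ M₂, ∀ y ∈ M₂, x * y = y * x)
    (hM₂max : ∀ M' : Subgroup G, M₂ ≤ M' → (∀ x ∈ M', ∀ y ∈ M', x * y = y * x) → M' = M₂)
    (hZM₂ : center G ≤ M₂) {χ₂ : M₂ →* ℂˣ}
    (hχ₂ : ∀ (z : G) (hz : z ∈ center G), χ₂ ⟨z, hZM₂ hz⟩ = χ ⟨z, hZM hz⟩) :
    ∃ T : (G → ℂ) →ₗ[ℂ] (G → ℂ),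
      Submodule.map T (indSpace M χ) = indSpace M₂ χ₂ ∧
      Set.InjOn T (indSpace M χ : Set (G → ℂ)) ∧
      ∀ g : G, ∀ f ∈ indSpace M χ, T (rho G g f) = rho G g (T f) := by
  have hAM₂ : A ≤ M₂ := hAcent.trans hZM₂
  have hgen₂ : ∀ a : A, χ₂ ⟨a, hAM₂ a.2⟩ = ε a := fun a => (hχ₂ a (hAcent a.2)).trans (hgen a)
  have : Nontrivial (indSpace M χ) := ⟨⟨⟨_, extendByZero_mem_indSpace χ⟩, 0, fun h => by
    simpa [extendByZero_one] using congrFun (congrArg Subtype.val h) 1⟩⟩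
  obtain ⟨S, hSinj, hSrange, hS⟩ := exists_intertwiner_onto_indSpace hAcent hcommA hε hM₂comm
    hM₂max hZM₂ hAM₂ hgen₂ (π := indRep χ)
    (fun z hz => by rw [indRep_eq_smul_of_mem_center χ hz (hZM hz), hχ₂ z hz])
    (indRep_eq_bot_or_eq_top hAcent hcommA hε hMcomm hMmax hZM hAM hgen)
  obtain ⟨W, hW⟩ := Submodule.exists_isCompl (indSpace M χ)
  have hpr : ∀ f (hf : f ∈ indSpace M χ), (indSpace M χ).projectionOnto W hW f = ⟨f, hf⟩ :=
    fun _ hf => Submodule.projectionOnto_apply_of_mem_left hW hf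
  refine ⟨S ∘ₗ (indSpace M χ).projectionOnto W hW, ?_, fun f hf f' hf' h => ?_, fun g f hf => ?_⟩
  · have hsurj : (indSpace M χ).map ((indSpace M χ).projectionOnto W hW) = ⊤ :=
      eq_top_iff.mpr fun v _ => ⟨v, v.2, hpr v v.2⟩
    rw [Submodule.map_comp, hsurj, Submodule.map_top, hSrange]
  · have := hSinj h
    rw [hpr f hf, hpr f' hf'] at this
    exact congrArg Subtype.val this
  · simp only [LinearMap.comp_apply, hpr f hf, hpr _ (rho_mem_indSpace χ g hf)]
    exact hS g ⟨f, hf⟩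

end Heisenberg

end

theorem stmt18_general {G : Type*} [Group G]
    (A : Subgroup G)
    (hAcent : A ≤ Subgroup.center G)
    (hcommA : ∀ x y : G, ⁅x, y⁆ ∈ A)
    (ε : A →* ℂˣ) (hε : Function.Injective ε)
    (hZfin : (Subgroup.center G).FiniteIndex)
    (M : Subgroup G)
    (hMcomm : ∀ x ∈ M, ∀ y ∈ M, x * y = y * x)
    (hMmax : ∀ M' : Subgroup G, M ≤ M' → (∀ x ∈ M', ∀ y ∈ M', x * y = y * x) → M' = M)
    (hZM : Subgroup.center G ≤ M) (hAM : A ≤ M)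
    (χ' : M →* ℂˣ)
    (hgen : ∀ a : A, χ' ⟨(a : G), hAM a.2⟩ = ε a) :
    -- the induced space is stable under right translation
    (∀ g : G, ∀ f ∈ indSpace M χ', rho G g f ∈ indSpace M χ') ∧
    -- (1) irreducibility of the induced representation
    (∀ U : Submodule ℂ (G → ℂ), U ≤ indSpace M χ' →
      (∀ g : G, ∀ f ∈ U, rho G g f ∈ U) → U = ⊥ ∨ U = indSpace M χ') ∧
    -- (2) the center acts by the central character χ = χ̃|_{Z(S̃)}
    (∀ (z : G) (hz : z ∈ Subgroup.center G), ∀ f ∈ indSpace M χ',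
      rho G z f = ((χ' ⟨z, hZM hz⟩ : ℂˣ) : ℂ) • f) ∧
    -- (3) independence of the choices of M̃ and χ̃: any other choice with the same
    -- restriction to the center yields an isomorphic representation
    (∀ M₂ : Subgroup G, (∀ x ∈ M₂, ∀ y ∈ M₂, x * y = y * x) →
      (∀ M' : Subgroup G, M₂ ≤ M' → (∀ x ∈ M', ∀ y ∈ M', x * y = y * x) → M' = M₂) →
      ∀ (hZM₂ : Subgroup.center G ≤ M₂) (χ₂ : M₂ →* ℂˣ),
        (∀ (z : G) (hz : z ∈ Subgroup.center G), χ₂ ⟨z, hZM₂ hz⟩ = χ' ⟨z, hZM hz⟩) →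
        ∃ T : (G → ℂ) →ₗ[ℂ] (G → ℂ),
          Submodule.map T (indSpace M χ') = indSpace M₂ χ₂ ∧
          Set.InjOn T (indSpace M χ' : Set (G → ℂ)) ∧
          ∀ g : G, ∀ f ∈ indSpace M χ', T (rho G g f) = rho G g (T f)) ∧
    -- (4) any irreducible representation on which the center acts by χ is isomorphic to
    -- the induced representation
    (∀ (V : Type) (_ : AddCommGroup V) (_ : Module ℂ V) (π : G →* (V →ₗ[ℂ] V)),
      Nontrivial V →
      (∀ U : Submodule ℂ V, (∀ g : G, ∀ v ∈ U, π g v ∈ U) → U = ⊥ ∨ U = ⊤) →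
      (∀ (z : G) (hz : z ∈ Subgroup.center G),
        π z = ((χ' ⟨z, hZM hz⟩ : ℂˣ) : ℂ) • (1 : V →ₗ[ℂ] V)) →
      ∃ T : V →ₗ[ℂ] (G → ℂ), Function.Injective T ∧
        LinearMap.range T = indSpace M χ' ∧
        ∀ (g : G) (v : V), T (π g v) = rho G g (T v)) :=
  ⟨fun g _ hf => rho_mem_indSpace χ' g hf,
    eq_bot_or_eq_indSpace hAcent hcommA hε hMcomm hMmax hZM hAM hgen,
    fun _ hz _ hf => rho_eq_smul_of_mem_center χ' hz (hZM hz) hf,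
    fun _ hM₂comm hM₂max hZM₂ _ hχ₂ =>
      exists_intertwiner_indSpace_of_eqOn_center hAcent hcommA hε hMcomm hMmax hZM hAM hgen
        hM₂comm hM₂max hZM₂ hχ₂,
    fun _ _ _ _ _ hirr hπ =>
      exists_intertwiner_onto_indSpace hAcent hcommA hε hMcomm hMmax hZM hAM hgen hπ hirr⟩

/-- Stone–von Neumann for metaplectic tori: Let `1 → A → S̃ → S → 1` be a
central extension of an abelian group `S = S̃/A` by a finite cyclic group `A` with
faithful character `ε`, such that the center `Z(S̃)` (the preimage of the radical
`Z†(S)`) has finite index. Let `M̃` be a maximal commutative subgroup and `χ̃ : M̃ → ℂˣ`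
a genuine character (extending a genuine character `χ` of `Z(S̃)`). Then the induced
representation `Ind_{M̃}^{S̃} χ̃` is irreducible, has central character `χ`, its
isomorphism class is independent of the choices of `M̃` and `χ̃`, and every irreducible
representation on which `Z(S̃)` acts by `χ` is isomorphic to it. -/
theorem stmt18 {G : Type*} [Group G]
    (A : Subgroup G) [Finite A] (hcyc : IsCyclic A)
    (hAcent : A ≤ Subgroup.center G)
    (hcommA : ∀ x y : G, ⁅x, y⁆ ∈ A)
    (ε : A →* ℂˣ) (hε : Function.Injective ε)
    (hZfin : (Subgroup.center G).FiniteIndex)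
    (M : Subgroup G)
    (hMcomm : ∀ x ∈ M, ∀ y ∈ M, x * y = y * x)
    (hMmax : ∀ M' : Subgroup G, M ≤ M' → (∀ x ∈ M', ∀ y ∈ M', x * y = y * x) → M' = M)
    (hZM : Subgroup.center G ≤ M) (hAM : A ≤ M)
    (χ' : M →* ℂˣ)
    (hgen : ∀ a : A, χ' ⟨(a : G), hAM a.2⟩ = ε a) :
    -- the induced space is stable under right translation
    (∀ g : G, ∀ f ∈ indSpace M χ', rho G g f ∈ indSpace M χ') ∧
    -- (1) irreducibility of the induced representation
    (∀ U : Submodule ℂ (G → ℂ), U ≤ indSpace M χ' →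
      (∀ g : G, ∀ f ∈ U, rho G g f ∈ U) → U = ⊥ ∨ U = indSpace M χ') ∧
    -- (2) the center acts by the central character χ = χ̃|_{Z(S̃)}
    (∀ (z : G) (hz : z ∈ Subgroup.center G), ∀ f ∈ indSpace M χ',
      rho G z f = ((χ' ⟨z, hZM hz⟩ : ℂˣ) : ℂ) • f) ∧
    -- (3) independence of the choices of M̃ and χ̃: any other choice with the same
    -- restriction to the center yields an isomorphic representation
    (∀ M₂ : Subgroup G, (∀ x ∈ M₂, ∀ y ∈ M₂, x * y = y * x) →
      (∀ M' : Subgroup G, M₂ ≤ M' → (∀ x ∈ M', ∀ y ∈ M', x * y = y * x) → M' = M₂) →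
      ∀ (hZM₂ : Subgroup.center G ≤ M₂) (χ₂ : M₂ →* ℂˣ),
        (∀ (z : G) (hz : z ∈ Subgroup.center G), χ₂ ⟨z, hZM₂ hz⟩ = χ' ⟨z, hZM hz⟩) →
        ∃ T : (G → ℂ) →ₗ[ℂ] (G → ℂ),
          Submodule.map T (indSpace M χ') = indSpace M₂ χ₂ ∧
          Set.InjOn T (indSpace M χ' : Set (G → ℂ)) ∧
          ∀ g : G, ∀ f ∈ indSpace M χ', T (rho G g f) = rho G g (T f)) ∧
    -- (4) any irreducible representation on which the center acts by χ is isomorphic to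
    -- the induced representation
    (∀ (V : Type) (_ : AddCommGroup V) (_ : Module ℂ V) (π : G →* (V →ₗ[ℂ] V)),
      Nontrivial V →
      (∀ U : Submodule ℂ V, (∀ g : G, ∀ v ∈ U, π g v ∈ U) → U = ⊥ ∨ U = ⊤) →
      (∀ (z : G) (hz : z ∈ Subgroup.center G),
        π z = ((χ' ⟨z, hZM hz⟩ : ℂˣ) : ℂ) • (1 : V →ₗ[ℂ] V)) →
      ∃ T : V →ₗ[ℂ] (G → ℂ), Function.Injective T ∧
        LinearMap.range T = indSpace M χ' ∧
        ∀ (g : G) (v : V), T (π g v) = rho G g (T v)) :=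
  stmt18_general A hAcent hcommA ε hε hZfin M hMcomm hMmax hZM hAM χ' hgen
end
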